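/- Let n > 1 be an integer not divisible by 3. The map π ↦ (area(π), dinv(π), skips(π)) is a bijection from the set of (3,n)-Dyck paths to the set of Dyck triples, i.e., triples (a,d,s) of non-negative integers with s ≤ min(a,d) and a + d + s + 1 = n. -/

import Mathlib

open scoped Classical

noncomputable section

/-- The rank of cell `(u,v)` in the `(m,n)`-diagram: `γ(u,v) = mn − un − (n+1−v)m`. -/
def rk (m n : ℕ) (u v : ℤ) : ℤ := (m : ℤ) * n - u * n - ((n : ℤ) + 1 - v) * m

/-- The cells `(u,v)`, `1 ≤ u ≤ m`, `1 ≤ v ≤ n`, of the `(m,n)`-diagram. -/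
def cells (m n : ℕ) : Finset (ℤ × ℤ) := Finset.Icc 1 (m : ℤ) ×ˢ Finset.Icc 1 (n : ℤ)

/-- `A` is the set of cells lying above some `(m,n)`-Dyck path: a northwest-closed set of
cells of the diagram, each lying strictly above the diagonal `y = (n/m)x`. -/
def IsDyckPath (m n : ℕ) (A : Finset (ℤ × ℤ)) : Prop :=
  A ⊆ cells m n ∧
  (∀ c ∈ A, 0 < (c.2 - 1) * (m : ℤ) - c.1 * n) ∧
  (∀ c ∈ A, ∀ x y : ℤ, 1 ≤ x → x ≤ c.1 → c.2 ≤ y → y ≤ (n : ℤ) → (x, y) ∈ A)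

/-- `arm(c)`: the number of cells above the path strictly east of `c` in its row. -/
def armOf (A : Finset (ℤ × ℤ)) (c : ℤ × ℤ) : ℕ :=
  (A.filter fun d => d.2 = c.2 ∧ c.1 < d.1).card

/-- `leg(c)`: the number of cells above the path strictly south of `c` in its column. -/
def legOf (A : Finset (ℤ × ℤ)) (c : ℤ × ℤ) : ℕ :=
  (A.filter fun d => d.1 = c.1 ∧ d.2 < c.2).card

/-- `Dinv(π)`: cells above the path with `arm/(leg+1) < m/n < (arm+1)/leg`
(stated cross-multiplied, so that division by zero is `+∞`). -/
def dinvSet (m n : ℕ) (A : Finset (ℤ × ℤ)) : Finset (ℤ × ℤ) :=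
  A.filter fun c =>
    (armOf A c : ℤ) * n < m * ((legOf A c : ℤ) + 1) ∧
    (m : ℤ) * (legOf A c : ℤ) < n * ((armOf A c : ℤ) + 1)

/-- `Skips(π)`: cells above the path not in `Dinv(π)`. -/
def skipsSet (m n : ℕ) (A : Finset (ℤ × ℤ)) : Finset (ℤ × ℤ) :=
  A.filter fun c => c ∉ dinvSet m n A

/-- `Area(π)`: cells of the diagram below the path having positive rank. -/
def areaSet (m n : ℕ) (A : Finset (ℤ × ℤ)) : Finset (ℤ × ℤ) :=
  (cells m n).filter fun c => 0 < rk m n c.1 c.2 ∧ c ∉ A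

def area (m n : ℕ) (A : Finset (ℤ × ℤ)) : ℕ := (areaSet m n A).card
def dinv (m n : ℕ) (A : Finset (ℤ × ℤ)) : ℕ := (dinvSet m n A).card
def skips (m n : ℕ) (A : Finset (ℤ × ℤ)) : ℕ := (skipsSet m n A).card

/-- The set of all `(m,n)`-Dyck paths (each identified with its set of cells above the path). -/
def dyckPaths (m n : ℕ) : Finset (Finset (ℤ × ℤ)) :=
  (cells m n).powerset.filter (IsDyckPath m n)

/-- The letters of the `(m,n)`-word, encoded as the pairs `(k, ℓ)` with `k, ℓ ≥ 1` and
rank `mn − km − ℓn > 0`; the color of the letter `(k, ℓ)` is `ℓ`. -/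
def letters (m n : ℕ) : Finset (ℤ × ℤ) :=
  (Finset.Icc 1 (n : ℤ) ×ˢ Finset.Icc 1 (m : ℤ)).filter fun p =>
    0 < (m : ℤ) * n - p.1 * m - p.2 * n

/-- The rank `mn − km − ℓn` of the letter `(k, ℓ)`. -/
def letterRank (m n : ℕ) (p : ℤ × ℤ) : ℤ := (m : ℤ) * n - p.1 * m - p.2 * n

/-- An `(m,n)`-rank word, identified with its set of highlighted letters: if `(k,ℓ)` is
highlighted then so is `(i,j)` for all `1 ≤ i ≤ k`, `1 ≤ j ≤ ℓ`. -/
def IsRankWord (m n : ℕ) (H : Finset (ℤ × ℤ)) : Prop :=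
  H ⊆ letters m n ∧
  ∀ p ∈ H, ∀ i j : ℤ, 1 ≤ i → i ≤ p.1 → 1 ≤ j → j ≤ p.2 → (i, j) ∈ H

/-- The set of all `(m,n)`-rank words. -/
def rankWords (m n : ℕ) : Finset (Finset (ℤ × ℤ)) :=
  (letters m n).powerset.filter (IsRankWord m n)

/-- The Dyck path `Π(w)` associated to a rank word: the cells above the path are exactly the
cells whose rank is a highlighted letter; the letter `(k,ℓ)` corresponds to the unique cell
`(ℓ, n+1−k)` of the diagram having the same rank. -/
def toPath (n : ℕ) (H : Finset (ℤ × ℤ)) : Finset (ℤ × ℤ) :=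
  H.image fun p => (p.2, (n : ℤ) + 1 - p.1)

/-- `area(w)`: the number of unhighlighted letters of the rank word. -/
def wordArea (m n : ℕ) (H : Finset (ℤ × ℤ)) : ℕ :=
  ((letters m n).filter fun p => p ∉ H).card

/-- `S(w)`: ordered pairs of letters `(a_k, b_ℓ)` with `a_k` highlighted, `b_ℓ` not
highlighted, and `a < b`. -/
def wordS (m n : ℕ) (H : Finset (ℤ × ℤ)) : Finset ((ℤ × ℤ) × (ℤ × ℤ)) :=
  (letters m n ×ˢ letters m n).filter fun pq =>
    pq.1 ∈ H ∧ pq.2 ∉ H ∧ letterRank m n pq.1 < letterRank m n pq.2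

/-- The relation on `S(w)`: `(a_k,b_ℓ) ∼ (c_r,d_t)` iff (`k = r` and `b ≡ d (mod n)`) or
(`ℓ = t` and `a ≡ c (mod n)`).  (The color of a letter is its second component.) -/
def wordRel (m n : ℕ) (x y : (ℤ × ℤ) × (ℤ × ℤ)) : Prop :=
  (x.1.2 = y.1.2 ∧ letterRank m n x.2 ≡ letterRank m n y.2 [ZMOD (n : ℤ)]) ∨
  (x.2.2 = y.2.2 ∧ letterRank m n x.1 ≡ letterRank m n y.1 [ZMOD (n : ℤ)])

/-- `skips(w)`: the number of equivalence classes of `S(w)` under the equivalence relation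
generated by `wordRel`. -/
def wordSkips (m n : ℕ) (H : Finset (ℤ × ℤ)) : ℕ :=
  Nat.card (Quot fun x y : {p // p ∈ wordS m n H} => wordRel m n x.1 y.1)

/-- `dinv(w) = (m−1)(n−1)/2 − area(w) − skips(w)`. -/
def wordDinv (m n : ℕ) (H : Finset (ℤ × ℤ)) : ℤ :=
  ((m : ℤ) - 1) * ((n : ℤ) - 1) / 2 - wordArea m n H - wordSkips m n H

/-- The generating function `W_{m,n}(b,q,t) = Σ_w b^{skips(w)} q^{dinv(w)} t^{area(w)}`. -/
def Wgen (m n : ℕ) (b q t : ℚ) : ℚ :=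
  ∑ H ∈ rankWords m n, b ^ wordSkips m n H * q ^ wordDinv m n H * t ^ wordArea m n H

/-- The rational `q,t`-Catalan polynomial `C_{m,n}(q,t) = Σ_π q^{dinv(π)} t^{area(π)}`. -/
def Cqt (m n : ℕ) (q t : ℚ) : ℚ :=
  ∑ A ∈ dyckPaths m n, q ^ dinv m n A * t ^ area m n A

/-- The two-variable Schur polynomial of a two-row partition `(l1, l2)`:
`s_{(l1,l2)}(q,t) = Σ_{j=0}^{l1−l2} q^{l2+j} t^{l1−j}`. -/
def schur2 (l1 l2 : ℕ) (q t : ℚ) : ℚ :=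
  ∑ j ∈ Finset.range (l1 - l2 + 1), q ^ (l2 + j) * t ^ (l1 - j)

/-! A `(3,n)`-Dyck path has no cell in column 3, so it is determined by the heights `a₁ ≥ a₂` of
its first two columns, subject to `3a₁ < 2n` and `3a₂ < n`. The cells above any Dyck path have
positive rank, and for `3 ∤ n` there are exactly `n - 1` cells of positive rank, so
`area = n - 1 - a₁ - a₂`. Column-2 cells have arm `0` and all lie in Dinv; a column-1 cell with
leg `ℓ` has arm `0` below the second column and arm `1` beside it, and lies in Dinv iff
`ℓ ≤ n / 3`, resp. `ℓ ≥ n / 3`. This gives `dinv` in closed form, `skips = a₁ + a₂ - dinv`, and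
what is left is to invert the explicit piecewise linear map `(a₁, a₂) ↦ (area, dinv, skips)`. -/

open Finset

lemma Finset.Icc_filter_lt_of_le_right {α : Type*} [LinearOrder α] [LocallyFiniteOrder α]
    {a b c : α} (h : c ≤ b) : (Icc a b).filter (· < c) = Ico a c := by
  ext x
  simp only [mem_filter, mem_Icc, mem_Ico]
  constructor
  · exact fun ⟨⟨hax, _⟩, hxc⟩ => ⟨hax, hxc⟩
  · exact fun ⟨hax, hxc⟩ => ⟨⟨hax, (hxc.trans_le h).le⟩, hxc⟩

lemma rk_eq (m n : ℕ) (u v : ℤ) : rk m n u v = (v - 1) * m - u * n := by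
  unfold rk
  ring

def posRankCells (m n : ℕ) : Finset (ℤ × ℤ) :=
  (cells m n).filter fun c => 0 < rk m n c.1 c.2

lemma dinv_add_skips (m n : ℕ) (A : Finset (ℤ × ℤ)) : dinv m n A + skips m n A = #A := by
  rw [add_comm, dinv, skips, skipsSet, ← sdiff_eq_filter]
  exact card_sdiff_add_card_eq_card (filter_subset _ A)

namespace IsDyckPath

variable {m n : ℕ} {A : Finset (ℤ × ℤ)}

lemma subset_posRankCells (hA : IsDyckPath m n A) : A ⊆ posRankCells m n := fun c hc =>
  mem_filter.2 ⟨hA.1 hc, (rk_eq m n c.1 c.2).symm ▸ hA.2.1 c hc⟩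

lemma area_add_card (hA : IsDyckPath m n A) : area m n A + #A = #(posRankCells m n) := by
  have hset : areaSet m n A = posRankCells m n \ A := by
    ext c
    simp only [areaSet, posRankCells, mem_filter, mem_sdiff, and_assoc]
  rw [area, hset, card_sdiff_add_card_eq_card hA.subset_posRankCells]

lemma bounds_of_mem (hA : IsDyckPath m n A) {c : ℤ × ℤ} (hc : c ∈ A) :
    (1 ≤ c.1 ∧ c.1 ≤ m) ∧ 1 ≤ c.2 ∧ c.2 ≤ n := by
  simpa only [cells, mem_product, mem_Icc] using hA.1 hc

lemma fst_lt_of_mem (hA : IsDyckPath m n A) {c : ℤ × ℤ} (hc : c ∈ A) : c.1 < m := by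
  have hdiag := hA.2.1 c hc
  have hbounds := hA.bounds_of_mem hc
  nlinarith

lemma exists_column_height (hA : IsDyckPath m n A) {u : ℤ} (hu : 1 ≤ u) :
    ∃ k : ℕ, ∀ v : ℤ, (u, v) ∈ A ↔ (n : ℤ) - k + 1 ≤ v ∧ v ≤ n := by
  set C := (A.filter fun c => c.1 = u).image Prod.snd
  have hmemC : ∀ v, v ∈ C ↔ (u, v) ∈ A := fun v => by simp [C]
  by_cases hC : C.Nonempty
  · have hlow : (u, C.min' hC) ∈ A := (hmemC _).1 (C.min'_mem hC)
    refine ⟨((n : ℤ) + 1 - C.min' hC).toNat, fun v => ⟨fun hv => ?_, fun hv => ?_⟩⟩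
    · have := C.min'_le v ((hmemC v).2 hv)
      have := (hA.bounds_of_mem hv).2.2
      omega
    · exact hA.2.2 _ hlow u v hu le_rfl (by omega) hv.2
  · refine ⟨0, fun v => ⟨fun hv => (hC ⟨v, (hmemC v).2 hv⟩).elim, ?_⟩⟩
    omega

end IsDyckPath

def twoColumnPath (n a₁ a₂ : ℕ) : Finset (ℤ × ℤ) :=
  {1} ×ˢ Icc ((n : ℤ) - a₁ + 1) n ∪ {2} ×ˢ Icc ((n : ℤ) - a₂ + 1) n

def heightPairs (n : ℕ) : Set (ℕ × ℕ) := {p | p.2 ≤ p.1 ∧ 3 * p.1 < 2 * n ∧ 3 * p.2 < n}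

def twoColumnDinv (n a₁ a₂ : ℕ) : ℕ := a₂ + min (a₁ - a₂) (n / 3 + 1) + min a₂ (a₁ - n / 3)

def twoColumnStats (n : ℕ) (p : ℕ × ℕ) : ℕ × ℕ × ℕ :=
  (n - 1 - p.1 - p.2, twoColumnDinv n p.1 p.2, p.1 + p.2 - twoColumnDinv n p.1 p.2)

def dyckTriples (n : ℕ) : Set (ℕ × ℕ × ℕ) :=
  {x | x.2.2 ≤ min x.1 x.2.1 ∧ x.1 + x.2.1 + x.2.2 + 1 = n}

section TwoColumnPath

variable {n a₁ a₂ : ℕ}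

lemma mem_twoColumnPath {c : ℤ × ℤ} :
    c ∈ twoColumnPath n a₁ a₂ ↔
      c.1 = 1 ∧ (n : ℤ) - a₁ + 1 ≤ c.2 ∧ c.2 ≤ n ∨
      c.1 = 2 ∧ (n : ℤ) - a₂ + 1 ≤ c.2 ∧ c.2 ≤ n := by
  simp only [twoColumnPath, mem_union, mem_product, mem_Icc, mem_singleton]

lemma card_filter_twoColumnPath (P : ℤ × ℤ → Prop) [DecidablePred P] :
    #((twoColumnPath n a₁ a₂).filter P) =
      #((Icc ((n : ℤ) - a₁ + 1) n).filter fun v => P (1, v)) +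
      #((Icc ((n : ℤ) - a₂ + 1) n).filter fun v => P (2, v)) := by
  have hdisj : Disjoint (({1} : Finset ℤ) ×ˢ Icc ((n : ℤ) - a₁ + 1) n)
      ({2} ×ˢ Icc ((n : ℤ) - a₂ + 1) n) :=
    disjoint_product.2 (Or.inl (by simp))
  rw [twoColumnPath, filter_union, card_union_of_disjoint (hdisj.mono (filter_subset _ _)
    (filter_subset _ _)), singleton_product, singleton_product, filter_map, filter_map,
    card_map, card_map]
  rfl

lemma card_twoColumnPath : #(twoColumnPath n a₁ a₂) = a₁ + a₂ := by
  simpa [Int.card_Icc] using card_filter_twoColumnPath (n := n) (a₁ := a₁) (a₂ := a₂) fun _ => True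

lemma isDyckPath_twoColumnPath (hp : (a₁, a₂) ∈ heightPairs n) :
    IsDyckPath 3 n (twoColumnPath n a₁ a₂) := by
  obtain ⟨h₂₁, h₁, h₂⟩ := hp
  refine ⟨fun c hc => ?_, fun ⟨u, v⟩ hc => ?_, fun c hc x y hx hxc hcy hyn => ?_⟩
  · simp only [mem_twoColumnPath, cells, mem_product, mem_Icc] at hc ⊢
    omega
  · rcases mem_twoColumnPath.1 hc with ⟨rfl, hv⟩ | ⟨rfl, hv⟩ <;> dsimp only <;> omega
  · simp only [mem_twoColumnPath] at hc ⊢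
    omega

lemma injOn_twoColumnPath :
    Set.InjOn (fun p : ℕ × ℕ => twoColumnPath n p.1 p.2) (heightPairs n) := by
  rintro ⟨a₁, a₂⟩ ⟨-, ha₁, ha₂⟩ ⟨b₁, b₂⟩ ⟨-, hb₁, hb₂⟩ h
  have hcell (u v : ℤ) := (Finset.ext_iff.1 h (u, v)).trans mem_twoColumnPath
  simp only [mem_twoColumnPath] at hcell
  -- the lowest cell of a column determines its height
  have := hcell 1 (n - a₁ + 1)
  have := hcell 1 (n - b₁ + 1)
  have := hcell 2 (n - a₂ + 1)
  have := hcell 2 (n - b₂ + 1)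
  simp only [Prod.mk.injEq]
  omega

lemma image_twoColumnPath (hn : 0 < n) :
    (fun p : ℕ × ℕ => twoColumnPath n p.1 p.2) '' heightPairs n = {A | IsDyckPath 3 n A} := by
  refine Set.Subset.antisymm (Set.image_subset_iff.2 fun p hp => isDyckPath_twoColumnPath hp) ?_
  intro A hA
  obtain ⟨a₁, hcol₁⟩ := hA.exists_column_height le_rfl
  obtain ⟨a₂, hcol₂⟩ := hA.exists_column_height one_le_two
  have hA_eq : twoColumnPath n a₁ a₂ = A := by
    ext ⟨u, v⟩
    rw [mem_twoColumnPath]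
    constructor
    · rintro (⟨rfl, hv⟩ | ⟨rfl, hv⟩)
      exacts [(hcol₁ v).2 hv, (hcol₂ v).2 hv]
    · intro hc
      have := hA.fst_lt_of_mem hc
      have := (hA.bounds_of_mem hc).1
      rcases (show u = 1 ∨ u = 2 by omega) with rfl | rfl
      exacts [Or.inl ⟨rfl, (hcol₁ v).1 hc⟩, Or.inr ⟨rfl, (hcol₂ v).1 hc⟩]
  have hlow₁ : 0 < a₁ → ((1 : ℤ), (n : ℤ) - a₁ + 1) ∈ A := fun h => (hcol₁ _).2 (by omega)
  have hlow₂ : 0 < a₂ → ((2 : ℤ), (n : ℤ) - a₂ + 1) ∈ A := fun h => (hcol₂ _).2 (by omega)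
  refine ⟨(a₁, a₂), ⟨?_, ?_, ?_⟩, hA_eq⟩ <;> by_contra! h
  · have := (hcol₁ _).1 (hA.2.2 _ (hlow₂ (by omega)) 1 _ le_rfl one_le_two le_rfl (by omega))
    omega
  · have := hA.2.1 _ (hlow₁ (by omega))
    dsimp only at this
    omega
  · have := hA.2.1 _ (hlow₂ (by omega))
    dsimp only at this
    omega

lemma posRankCells_three (h3 : ¬ 3 ∣ n) :
    posRankCells 3 n = twoColumnPath n (n - 1 - n / 3) (n / 3) := by
  ext ⟨u, v⟩
  simp only [posRankCells, cells, mem_filter, mem_product, mem_Icc, rk_eq, mem_twoColumnPath]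
  constructor
  · rintro ⟨⟨⟨hu₁, hu₃⟩, hv⟩, hpos⟩
    rcases (show u = 1 ∨ u = 2 ∨ u = 3 by omega) with rfl | rfl | rfl <;> omega
  · rintro (⟨rfl, hv⟩ | ⟨rfl, hv⟩) <;> omega

lemma legOf_twoColumnPath_one {v : ℤ} (hv : v ≤ n) :
    legOf (twoColumnPath n a₁ a₂) (1, v) = (v - (n - a₁ + 1)).toNat := by
  simp [legOf, card_filter_twoColumnPath, Icc_filter_lt_of_le_right hv]

lemma legOf_twoColumnPath_two {v : ℤ} (hv : v ≤ n) :
    legOf (twoColumnPath n a₁ a₂) (2, v) = (v - (n - a₂ + 1)).toNat := by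
  simp [legOf, card_filter_twoColumnPath, Icc_filter_lt_of_le_right hv]

lemma armOf_twoColumnPath_one {v : ℤ} (hv : v ≤ n) :
    armOf (twoColumnPath n a₁ a₂) (1, v) = if (n : ℤ) - a₂ < v then 1 else 0 := by
  simp [armOf, card_filter_twoColumnPath, filter_eq', hv, apply_ite]

lemma armOf_twoColumnPath_two (v : ℤ) : armOf (twoColumnPath n a₁ a₂) (2, v) = 0 := by
  simp [armOf, card_filter_twoColumnPath]

lemma mem_dinvSet_twoColumnPath_one (h3 : ¬ 3 ∣ n) (hp : (a₁, a₂) ∈ heightPairs n) {v : ℤ} :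
    (1, v) ∈ dinvSet 3 n (twoColumnPath n a₁ a₂) ↔ (n : ℤ) - a₁ + 1 ≤ v ∧
      (v ≤ n - a₂ ∧ v ≤ n - a₁ + 1 + n / 3 ∨ n - a₂ < v ∧ n - a₁ + 1 + n / 3 ≤ v ∧ v ≤ n) := by
  obtain ⟨h₂₁, h₁, h₂⟩ := hp
  rw [dinvSet, mem_filter, mem_twoColumnPath]
  constructor
  · rintro ⟨⟨-, hv⟩ | ⟨h, -⟩, hcond⟩
    · rw [armOf_twoColumnPath_one hv.2, legOf_twoColumnPath_one hv.2] at hcond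
      split_ifs at hcond <;> push_cast at hcond <;> omega
    · norm_num at h
  · intro hv
    have hvn : v ≤ n := by omega
    refine ⟨Or.inl ⟨rfl, hv.1, hvn⟩, ?_⟩
    rw [armOf_twoColumnPath_one hvn, legOf_twoColumnPath_one hvn]
    split_ifs <;> push_cast <;> omega

lemma mem_dinvSet_twoColumnPath_two (hp : (a₁, a₂) ∈ heightPairs n) {v : ℤ} :
    (2, v) ∈ dinvSet 3 n (twoColumnPath n a₁ a₂) ↔ (n : ℤ) - a₂ + 1 ≤ v ∧ v ≤ n := by
  obtain ⟨-, -, h₂⟩ := hp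
  rw [dinvSet, mem_filter, mem_twoColumnPath]
  constructor
  · rintro ⟨⟨h, -⟩ | ⟨-, hv⟩, -⟩
    · norm_num at h
    · exact hv
  · intro hv
    refine ⟨Or.inr ⟨rfl, hv⟩, ?_⟩
    rw [armOf_twoColumnPath_two, legOf_twoColumnPath_two hv.2]
    push_cast
    omega

lemma card_dinvSet_column_one (h3 : ¬ 3 ∣ n) (hp : (a₁, a₂) ∈ heightPairs n) :
    #((Icc ((n : ℤ) - a₁ + 1) n).filter fun v => (1, v) ∈ dinvSet 3 n (twoColumnPath n a₁ a₂)) =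
      min (a₁ - a₂) (n / 3 + 1) + min a₂ (a₁ - n / 3) := by
  have hcol : (Icc ((n : ℤ) - a₁ + 1) n).filter
      (fun v => (1, v) ∈ dinvSet 3 n (twoColumnPath n a₁ a₂)) =
      Icc ((n : ℤ) - a₁ + 1) (min ((n : ℤ) - a₂) (n - a₁ + 1 + n / 3)) ∪
        Icc (max ((n : ℤ) - a₂ + 1) (n - a₁ + 1 + n / 3)) n := by
    ext v
    simp only [mem_filter, mem_dinvSet_twoColumnPath_one h3 hp, mem_union, mem_Icc]
    omega
  rw [hcol, card_union_of_disjoint (disjoint_left.2 fun v hv hv' => by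
    rw [mem_Icc] at hv hv'; omega), Int.card_Icc, Int.card_Icc]
  omega

lemma card_dinvSet_column_two (hp : (a₁, a₂) ∈ heightPairs n) :
    #((Icc ((n : ℤ) - a₂ + 1) n).filter fun v => (2, v) ∈ dinvSet 3 n (twoColumnPath n a₁ a₂)) =
      a₂ := by
  rw [filter_true_of_mem fun v hv => (mem_dinvSet_twoColumnPath_two hp).2 (mem_Icc.1 hv),
    Int.card_Icc]
  omega

lemma dinv_twoColumnPath (h3 : ¬ 3 ∣ n) (hp : (a₁, a₂) ∈ heightPairs n) :
    dinv 3 n (twoColumnPath n a₁ a₂) = twoColumnDinv n a₁ a₂ := by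
  have hsub : dinvSet 3 n (twoColumnPath n a₁ a₂) ⊆ twoColumnPath n a₁ a₂ := filter_subset _ _
  rw [dinv, ← inter_eq_right.2 hsub, ← filter_mem_eq_inter, card_filter_twoColumnPath,
    card_dinvSet_column_one h3 hp, card_dinvSet_column_two hp, twoColumnDinv]
  ring

lemma stats_twoColumnPath (h3 : ¬ 3 ∣ n) (hp : (a₁, a₂) ∈ heightPairs n) :
    (area 3 n (twoColumnPath n a₁ a₂), dinv 3 n (twoColumnPath n a₁ a₂),
      skips 3 n (twoColumnPath n a₁ a₂)) = twoColumnStats n (a₁, a₂) := by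
  have harea := (isDyckPath_twoColumnPath hp).area_add_card
  have hskips := dinv_add_skips 3 n (twoColumnPath n a₁ a₂)
  rw [posRankCells_three h3, card_twoColumnPath, card_twoColumnPath] at harea
  rw [dinv_twoColumnPath h3 hp, card_twoColumnPath] at hskips
  dsimp only [twoColumnStats]
  rw [dinv_twoColumnPath h3 hp, Prod.mk.injEq, Prod.mk.injEq]
  exact ⟨by omega, rfl, by omega⟩

end TwoColumnPath

lemma bijOn_twoColumnStats {n : ℕ} (h3 : ¬ 3 ∣ n) :
    Set.BijOn (twoColumnStats n) (heightPairs n) (dyckTriples n) := by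
  refine ⟨?_, ?_, ?_⟩
  · rintro ⟨a₁, a₂⟩ ⟨h₂₁, h₁, h₂⟩
    simp only [dyckTriples, twoColumnStats, twoColumnDinv, Set.mem_ofPred_eq]
    omega
  · rintro ⟨a₁, a₂⟩ ⟨h₂₁, h₁, h₂⟩ ⟨b₁, b₂⟩ ⟨g₂₁, g₁, g₂⟩ h
    simp only [twoColumnStats, twoColumnDinv, Prod.mk.injEq] at h ⊢
    omega
  · rintro ⟨a, d, s⟩ ⟨hs, hsum⟩
    dsimp only at hs hsum
    simp only [Set.mem_image, heightPairs, twoColumnStats, twoColumnDinv, Prod.exists,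
      Prod.mk.injEq, Set.mem_ofPred_eq]
    -- For `d ≤ n / 3` the whole first column lies in Dinv; otherwise `a₁ - a₂` is
    -- `n / 3 - s` or `n / 3 + 1 + s`, according to the parity of `d - n / 3`.
    rcases le_or_gt d (n / 3) with hd | hd
    · exact ⟨d, s, by omega⟩
    obtain ⟨k, hk | hk⟩ := Nat.even_or_odd' (d - n / 3)
    · exact ⟨n / 3 + k, s + k, by omega⟩
    · exact ⟨s + n / 3 + k + 1, k, by omega⟩

theorem stmt18_general (n : ℕ) (h3 : ¬ (3 ∣ n)) :
    Set.BijOn (fun A => (area 3 n A, dinv 3 n A, skips 3 n A))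
      {A : Finset (ℤ × ℤ) | IsDyckPath 3 n A}
      {x : ℕ × ℕ × ℕ | x.2.2 ≤ min x.1 x.2.1 ∧ x.1 + x.2.1 + x.2.2 + 1 = n} := by
  have hcomp : Set.BijOn ((fun A => (area 3 n A, dinv 3 n A, skips 3 n A)) ∘
      fun p : ℕ × ℕ => twoColumnPath n p.1 p.2) (heightPairs n) (dyckTriples n) :=
    (bijOn_twoColumnStats h3).congr fun p hp => (stats_twoColumnPath h3 hp).symm
  rwa [Set.bijOn_comp_iff injOn_twoColumnPath, image_twoColumnPath (by omega)] at hcomp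

/-- The map `π ↦ (area(π), dinv(π), skips(π))` is a bijection from the set of `(3,n)`-Dyck
paths to the set of Dyck triples `(a,d,s)` with `s ≤ min(a,d)` and `a + d + s + 1 = n`. -/
theorem stmt18 (n : ℕ) (hn : 1 < n) (h3 : ¬ (3 ∣ n)) :
    Set.BijOn (fun A => (area 3 n A, dinv 3 n A, skips 3 n A))
      {A : Finset (ℤ × ℤ) | IsDyckPath 3 n A}
      {x : ℕ × ℕ × ℕ | x.2.2 ≤ min x.1 x.2.1 ∧ x.1 + x.2.1 + x.2.2 + 1 = n} :=
  stmt18_general n h3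

end
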